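/- Let P, Q be centred elliptical distributions on ℝ^d (i.e., with μ = 0) whose projections onto the line spanned by x agree for every x in some spanning set of ℝ^d. Then there exist a single continuous function ψ : [0,∞) → ℂ and positive semi-definite matrices Σ₁, Σ₂ such that φ_P(ξ) = ψ(ξᵀΣ₁ξ) and φ_Q(ξ) = ψ(ξᵀΣ₂ξ) for all ξ ∈ ℝ^d. -/

import Mathlib

open MeasureTheory

/-- The characteristic function of a measure on `ℝ^d`. -/
noncomputable def cf {d : ℕ} (P : Measure (EuclideanSpace ℝ (Fin d)))
    (ξ : EuclideanSpace ℝ (Fin d)) : ℂ :=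
  ∫ x, Complex.exp (((inner ℝ x ξ : ℝ) : ℂ) * Complex.I) ∂P

/-- The quadratic form `ξᵀ M ξ`. -/
noncomputable def qf {d : ℕ} (M : Matrix (Fin d) (Fin d) ℝ)
    (ξ : EuclideanSpace ℝ (Fin d)) : ℝ :=
  dotProduct (fun i => ξ i) (M.mulVec (fun i => ξ i))

/-- `P` is an elliptical distribution with location `μ`, scatter matrix `Sig`
and generator `ψ`. -/
def IsElliptical {d : ℕ} (P : Measure (EuclideanSpace ℝ (Fin d)))
    (μ : EuclideanSpace ℝ (Fin d)) (Sig : Matrix (Fin d) (Fin d) ℝ) (ψ : ℝ → ℂ) : Prop :=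
  IsProbabilityMeasure P ∧ Sig.PosSemidef ∧ ContinuousOn ψ (Set.Ici 0) ∧
    ∀ ξ, cf P ξ = Complex.exp (((inner ℝ μ ξ : ℝ) : ℂ) * Complex.I) * ψ (qf Sig ξ)

/-- The projection of `P` onto the line spanned by `x`: the pushforward of `P`
under the orthogonal projection onto `span {x}`. -/
noncomputable def projLine {d : ℕ} (P : Measure (EuclideanSpace ℝ (Fin d)))
    (x : EuclideanSpace ℝ (Fin d)) :
    Measure (Submodule.span ℝ ({x} : Set (EuclideanSpace ℝ (Fin d)))) :=
  P.map (Submodule.orthogonalProjectionOnto (Submodule.span ℝ {x}))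

/-!
Along the line through `x`, `φ_P (t • x) = ψ₁ (t² a)` and `φ_Q (t • x) = ψ₂ (t² b)` with
`a = xᵀ Σ₁' x`, `b = xᵀ Σ₂' x`, so equal line projections give `ψ₁ (s a) = ψ₂ (s b)` for `s ≥ 0`.
If `b > 0` for some `x ∈ S`, then `ψ₂ u = ψ₁ ((a / b) u)`, i.e. `Q` is elliptical with
generator `ψ₁` and scatter `(a / b) Σ₂'`. Otherwise the semidefinite form of `Σ₂'` vanishes on a
spanning set, hence everywhere, so `φ_Q ≡ 1 = ψ₁ 0` and `Q` is elliptical with generator `ψ₁` and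
scatter `0`.
-/

section QuadraticForm

variable {d : ℕ} {M : Matrix (Fin d) (Fin d) ℝ}

lemma qf_nonneg (hM : M.PosSemidef) (ξ : EuclideanSpace ℝ (Fin d)) : 0 ≤ qf M ξ := by
  simpa [qf] using hM.dotProduct_mulVec_nonneg (fun i => ξ i)

lemma qf_zero_right (M : Matrix (Fin d) (Fin d) ℝ) : qf M 0 = 0 := by
  simp [qf]

lemma qf_smul_left (c : ℝ) (M : Matrix (Fin d) (Fin d) ℝ) (ξ : EuclideanSpace ℝ (Fin d)) :
    qf (c • M) ξ = c * qf M ξ := by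
  simp [qf, Matrix.smul_mulVec, dotProduct_smul]

lemma qf_smul_right (M : Matrix (Fin d) (Fin d) ℝ) (t : ℝ) (ξ : EuclideanSpace ℝ (Fin d)) :
    qf M (t • ξ) = t ^ 2 * qf M ξ := by
  simp only [qf, PiLp.smul_apply]
  rw [show (fun i => t • ξ i) = t • fun i => ξ i from rfl, Matrix.mulVec_smul, smul_dotProduct,
    dotProduct_smul, smul_eq_mul, smul_eq_mul, sq, mul_assoc]

/-- A semidefinite form vanishes exactly on the kernel of its matrix, a subspace. -/
lemma qf_eq_zero_of_span_eq_top (hM : M.PosSemidef) {S : Set (EuclideanSpace ℝ (Fin d))}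
    (hS : Submodule.span ℝ S = ⊤) (h : ∀ x ∈ S, qf M x = 0) (ξ : EuclideanSpace ℝ (Fin d)) :
    qf M ξ = 0 := by
  let f := M.toLin' ∘ₗ (WithLp.linearEquiv 2 ℝ (Fin d → ℝ)).toLinearMap
  have hf : f = 0 := LinearMap.ext_on hS fun x hx =>
    (hM.dotProduct_mulVec_zero_iff _).mp (by simpa [qf] using h x hx)
  have : M.mulVec (fun i => ξ i) = 0 := LinearMap.congr_fun hf ξ
  simp [qf, this]

end QuadraticForm

section CharacteristicFunction

variable {d : ℕ} {P Q : Measure (EuclideanSpace ℝ (Fin d))}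

lemma cf_zero (P : Measure (EuclideanSpace ℝ (Fin d))) [IsProbabilityMeasure P] : cf P 0 = 1 := by
  simp [cf]

/-- On a subspace `K`, the characteristic function only sees the projection of `P` onto `K`,
because `⟪y, u⟫ = ⟪π_K y, u⟫` for `u ∈ K`. -/
lemma cf_eq_integral_map_orthogonalProjectionOnto (P : Measure (EuclideanSpace ℝ (Fin d)))
    (K : Submodule ℝ (EuclideanSpace ℝ (Fin d))) (u : K) :
    cf P u = ∫ z : K, Complex.exp (((inner ℝ z u : ℝ) : ℂ) * Complex.I)
      ∂(P.map K.orthogonalProjectionOnto) := by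
  have hcont : Continuous fun z : K => Complex.exp (((inner ℝ z u : ℝ) : ℂ) * Complex.I) := by
    fun_prop
  rw [integral_map K.orthogonalProjectionOnto.continuous.aemeasurable
    hcont.aestronglyMeasurable]
  simp only [Submodule.inner_orthogonalProjectionOnto_eq_of_mem_right, cf]

lemma cf_smul_eq_of_projLine_eq {x : EuclideanSpace ℝ (Fin d)}
    (h : projLine P x = projLine Q x) (t : ℝ) : cf P (t • x) = cf Q (t • x) := by
  let u : Submodule.span ℝ {x} :=
    ⟨t • x, Submodule.smul_mem _ t (Submodule.mem_span_singleton_self x)⟩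
  rw [show t • x = u from rfl, cf_eq_integral_map_orthogonalProjectionOnto,
    cf_eq_integral_map_orthogonalProjectionOnto, ← projLine, ← projLine, h]

end CharacteristicFunction

namespace IsElliptical

variable {d : ℕ} {P Q : Measure (EuclideanSpace ℝ (Fin d))} {μ : EuclideanSpace ℝ (Fin d)}
  {Sig Sig₁ Sig₂ : Matrix (Fin d) (Fin d) ℝ} {ψ ψ₁ ψ₂ : ℝ → ℂ}

lemma cf_eq (h : IsElliptical P 0 Sig ψ) (ξ : EuclideanSpace ℝ (Fin d)) :
    cf P ξ = ψ (qf Sig ξ) := by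
  simpa using h.2.2.2 ξ

lemma generator_zero (h : IsElliptical P μ Sig ψ) : ψ 0 = 1 := by
  have := h.1
  simpa [cf_zero, qf_zero_right] using (h.2.2.2 0).symm

lemma smul_scatter (h : IsElliptical P μ Sig ψ₁) (hψ₂ : ContinuousOn ψ₂ (Set.Ici 0)) {c : ℝ}
    (hc : 0 ≤ c) (hψ : ∀ ξ, ψ₁ (qf Sig ξ) = ψ₂ (c * qf Sig ξ)) :
    IsElliptical P μ (c • Sig) ψ₂ :=
  ⟨h.1, h.2.1.smul hc, hψ₂, fun ξ => by rw [h.2.2.2 ξ, hψ, qf_smul_left]⟩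

lemma generator_eq_of_projLine_eq (hP : IsElliptical P 0 Sig₁ ψ₁) (hQ : IsElliptical Q 0 Sig₂ ψ₂)
    {x : EuclideanSpace ℝ (Fin d)} (hx : projLine P x = projLine Q x) {s : ℝ} (hs : 0 ≤ s) :
    ψ₁ (s * qf Sig₁ x) = ψ₂ (s * qf Sig₂ x) := by
  have := cf_smul_eq_of_projLine_eq hx (Real.sqrt s)
  rwa [hP.cf_eq, hQ.cf_eq, qf_smul_right, qf_smul_right, Real.sq_sqrt hs] at this

lemma rescale_of_projLine_eq (hP : IsElliptical P 0 Sig₁ ψ₁) (hQ : IsElliptical Q 0 Sig₂ ψ₂)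
    {x : EuclideanSpace ℝ (Fin d)} (hx : projLine P x = projLine Q x) (hpos : 0 < qf Sig₁ x) :
    IsElliptical P 0 ((qf Sig₂ x / qf Sig₁ x) • Sig₁) ψ₂ := by
  refine hP.smul_scatter hQ.2.2.1 (div_nonneg (qf_nonneg hQ.2.1 x) hpos.le) fun ξ => ?_
  have := hP.generator_eq_of_projLine_eq hQ hx (div_nonneg (qf_nonneg hP.2.1 ξ) hpos.le)
  rwa [div_mul_cancel₀ _ hpos.ne', div_mul_comm] at this

end IsElliptical

lemma exists_common_generator_of_isElliptical {d : ℕ} {P Q : Measure (EuclideanSpace ℝ (Fin d))}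
    {Sig₁ Sig₂ : Matrix (Fin d) (Fin d) ℝ} {ψ : ℝ → ℂ}
    (hP : IsElliptical P 0 Sig₁ ψ) (hQ : IsElliptical Q 0 Sig₂ ψ) :
    ∃ (ψ : ℝ → ℂ) (Sig₁ Sig₂ : Matrix (Fin d) (Fin d) ℝ),
      ContinuousOn ψ (Set.Ici 0) ∧ Sig₁.PosSemidef ∧ Sig₂.PosSemidef ∧
      (∀ ξ, cf P ξ = ψ (qf Sig₁ ξ)) ∧ (∀ ξ, cf Q ξ = ψ (qf Sig₂ ξ)) :=
  ⟨ψ, Sig₁, Sig₂, hP.2.2.1, hP.2.1, hQ.2.1, hP.cf_eq, hQ.cf_eq⟩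

/-- Two centred elliptical distributions with equal projections along the lines
of a spanning set can be written with a common generator `ψ`. -/
theorem common_generator_of_proj_eq {d : ℕ}
    (P Q : Measure (EuclideanSpace ℝ (Fin d)))
    (Sig₁' Sig₂' : Matrix (Fin d) (Fin d) ℝ) (ψ₁ ψ₂ : ℝ → ℂ)
    (hP : IsElliptical P 0 Sig₁' ψ₁) (hQ : IsElliptical Q 0 Sig₂' ψ₂)
    (S : Set (EuclideanSpace ℝ (Fin d))) (hspan : Submodule.span ℝ S = ⊤)
    (hproj : ∀ x ∈ S, projLine P x = projLine Q x) :
    ∃ (ψ : ℝ → ℂ) (Sig₁ Sig₂ : Matrix (Fin d) (Fin d) ℝ),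
      ContinuousOn ψ (Set.Ici 0) ∧ Sig₁.PosSemidef ∧ Sig₂.PosSemidef ∧
      (∀ ξ, cf P ξ = ψ (qf Sig₁ ξ)) ∧ (∀ ξ, cf Q ξ = ψ (qf Sig₂ ξ)) := by
  by_cases hpos : ∃ x ∈ S, 0 < qf Sig₂' x
  · obtain ⟨x, hx, hx_pos⟩ := hpos
    exact exists_common_generator_of_isElliptical hP
      (hQ.rescale_of_projLine_eq hP (hproj x hx).symm hx_pos)
  push Not at hpos
  have hzero := qf_eq_zero_of_span_eq_top hQ.2.1 hspan fun x hx =>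
    (hpos x hx).antisymm (qf_nonneg hQ.2.1 x)
  refine exists_common_generator_of_isElliptical hP
    (hQ.smul_scatter (c := 0) hP.2.2.1 le_rfl fun ξ => ?_)
  rw [hzero, mul_zero, hQ.generator_zero, hP.generator_zero]
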